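/- arXiv:2406.07582 — 2 statements merged into one kernel-verified Lean document; each statement's English description precedes it below -/
import Mathlib

section
/- The generalized coefficient mutation formula is independent of the sign ε: for y ∈ ℙ a semifield, b ∈ ℤ, d ≥ 1, and z̃_s ∈ ℙ with palindromic (reciprocal) coefficients z̃_s = z̃_{d−s} for all s, one has (y^{[b]_+})^d (⊕_{s=0}^{d} z̃_s y^{s})^{-b} = (y^{[-b]_+})^d (⊕_{s=0}^{d} z̃_s y^{-s})^{-b} in ℙ. -/
/-- A semifield in the sense of cluster algebra theory: a multiplicative abelian
group `P` with an auxiliary addition `⊕` that is commutative, associative and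
distributive over multiplication. -/
structure SemifieldStr (P : Type*) [CommGroup P] where
  o : P → P → P
  o_comm : ∀ a b, o a b = o b a
  o_assoc : ∀ a b c, o (o a b) c = o a (o b c)
  o_distrib : ∀ a b c, o a b * c = o (a * c) (b * c)

namespace SemifieldStr

variable {P : Type*} [CommGroup P]

/-- `S.ofold n p` is the `(n+1)`-fold ⊕-sum `p ⊕ ⋯ ⊕ p`. -/
def ofold (S : SemifieldStr P) : ℕ → P → P
  | 0, p => p
  | n + 1, p => S.o p (S.ofold n p)

/-- ⊕-sum of `a` with all of the elements of the list `l`. -/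
def osum (S : SemifieldStr P) : P → List P → P
  | a, [] => a
  | a, b :: l => S.o a (S.osum b l)

/-- The ⊕-sum `f 0 ⊕ f 1 ⊕ ⋯ ⊕ f d`. -/
def oFinSum (S : SemifieldStr P) (d : ℕ) (f : ℕ → P) : P :=
  S.osum (f 0) ((List.range d).map fun s => f (s + 1))

/-- The tilde map `ℤ≥0[ℙ] \ {0} → ℙ`, sending `z = Σ_j m_j p_j` to
`z̃ = ⊕_j m_j p_j`, where `m_j p_j` denotes the `m_j`-fold ⊕-sum of `p_j`.
(For `z = 0` we set the junk value `1`.) -/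
noncomputable def tilde (S : SemifieldStr P) (z : MonoidAlgebra ℕ P) : P :=
  match z.coeff.support.toList.map (fun p => S.ofold (z.coeff p - 1) p) with
  | [] => 1
  | a :: l => S.osum a l

end SemifieldStr

namespace SemifieldStr

variable {P : Type*} [CommGroup P] (S : SemifieldStr P)

/-- `o` extended to `Option P` with `none` as a unit. -/
def o' : Option P → Option P → Option P
  | none, x => x
  | x, none => x
  | some a, some b => some (S.o a b)

lemma o'_comm (x y : Option P) : S.o' x y = S.o' y x := by
  cases x <;> cases y <;> simp [o', S.o_comm]

lemma o'_assoc (x y z : Option P) : S.o' (S.o' x y) z = S.o' x (S.o' y z) := by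
  cases x <;> cases y <;> cases z <;> simp [o', S.o_assoc]

lemma foldr_some (l : List P) (a : P) :
    ((a :: l).map some).foldr S.o' none = some (S.osum a l) := by
  induction l generalizing a with
  | nil => rfl
  | cons b t ih =>
      show S.o' (some a) (((b :: t).map some).foldr S.o' none) = _
      rw [ih b]; rfl

lemma osum_perm {l₁ l₂ : List P} {a₁ a₂ : P} (h : (a₁ :: l₁).Perm (a₂ :: l₂)) :
    S.osum a₁ l₁ = S.osum a₂ l₂ := by
  have hm : ((a₁ :: l₁).map some).Perm ((a₂ :: l₂).map some) := h.map some
  have : ∀ (x y : Option P) (z : Option P),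
      S.o' x (S.o' y z) = S.o' y (S.o' x z) := by
    intro x y z
    rw [← S.o'_assoc, S.o'_comm x y, S.o'_assoc]
  have key := @List.Perm.foldr_eq _ _ S.o' _ _ ⟨this⟩ hm none
  rw [foldr_some, foldr_some] at key
  exact Option.some_injective _ key

lemma osum_mul (c : P) (l : List P) (a : P) :
    S.osum a l * c = S.osum (a * c) (l.map (· * c)) := by
  induction l generalizing a with
  | nil => rfl
  | cons b t ih =>
      show S.o a (S.osum b t) * c = S.o (a * c) (S.osum (b * c) (t.map (· * c)))
      rw [S.o_distrib, ih b]

lemma oFinSum_eq (d : ℕ) (f : ℕ → P) :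
    ∃ a l, (List.range (d + 1)).map f = a :: l ∧ S.oFinSum d f = S.osum a l := by
  refine ⟨f 0, (List.range d).map fun s => f (s + 1), ?_, rfl⟩
  rw [List.range_succ_eq_map, List.map_cons, List.map_map]
  rfl

end SemifieldStr

lemma map_sub_range (n : ℕ) :
    (List.range (n + 1)).map (fun s => n - s) = (List.range (n + 1)).reverse := by
  induction n with
  | zero => rfl
  | succ n ih =>
      have h1 := List.range_succ_eq_map (n := n + 1)
      have h2 := List.range_succ (n := n + 1)
      conv_lhs => rw [h1]
      conv_rhs => rw [h2]
      rw [List.map_cons, List.map_map, List.reverse_append]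
      simp only [Nat.sub_zero, List.reverse_singleton, List.singleton_append,
        Function.comp_def, Nat.succ_sub_succ]
      rw [ih]

/-- ε-independence of the generalized coefficient mutation formula.
For `y ∈ ℙ`, `b ∈ ℤ`, `d ≥ 1` and reciprocal (palindromic) coefficients
`z̃_s = z̃_{d−s}`, one has
`(y^{[b]_+})^d (⊕_{s=0}^{d} z̃_s y^{s})^{-b} = (y^{[-b]_+})^d (⊕_{s=0}^{d} z̃_s y^{-s})^{-b}`. -/
theorem eps_independence {P : Type*} [CommGroup P] (S : SemifieldStr P)
    (y : P) (b : ℤ) (d : ℕ) (hd : 1 ≤ d)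
    (ztilde : ℕ → P) (hrec : ∀ s ≤ d, ztilde s = ztilde (d - s)) :
    (y ^ max b 0) ^ d * (S.oFinSum d fun s => ztilde s * y ^ (s : ℤ)) ^ (-b) =
      (y ^ max (-b) 0) ^ d * (S.oFinSum d fun s => ztilde s * y ^ (-(s : ℤ))) ^ (-b) := by
  set c : P := y ^ (d : ℤ) with hc
  have hL : ((List.range (d + 1)).map (fun s => ztilde s * y ^ (s : ℤ))).Perm
      (((List.range (d + 1)).map (fun s => ztilde s * y ^ (-(s : ℤ)))).map (· * c)) := by
    rw [List.map_map]
    have e1 : (List.range (d + 1)).map (fun s => ztilde s * y ^ (s : ℤ))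
        = (List.range (d + 1)).map (fun s => ztilde (d - s) * y ^ (s : ℤ)) := by
      apply List.map_congr_left
      intro s hs
      rw [← hrec s (Nat.lt_succ_iff.mp (List.mem_range.mp hs))]
    have e2 : ((List.range (d + 1)).reverse).map (fun s => ztilde (d - s) * y ^ (s : ℤ))
        = (List.range (d + 1)).map ((· * c) ∘ fun s => ztilde s * y ^ (-(s : ℤ))) := by
      rw [← map_sub_range, List.map_map]
      apply List.map_congr_left
      intro s hs
      have hsd : s ≤ d := Nat.lt_succ_iff.mp (List.mem_range.mp hs)
      simp only [Function.comp_apply]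
      rw [Nat.sub_sub_self hsd, hc, mul_assoc, ← zpow_add]
      congr 2
      omega
    rw [e1, ← e2]
    exact (List.reverse_perm _).symm.map _
  have key : (S.oFinSum d fun s => ztilde s * y ^ (s : ℤ))
      = (S.oFinSum d fun s => ztilde s * y ^ (-(s : ℤ))) * c := by
    obtain ⟨a1, l1, h1, hA⟩ := S.oFinSum_eq d (fun s => ztilde s * y ^ (s : ℤ))
    obtain ⟨a2, l2, h2, hB⟩ := S.oFinSum_eq d (fun s => ztilde s * y ^ (-(s : ℤ)))
    rw [hA, hB, S.osum_mul]
    apply S.osum_perm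
    rw [← List.map_cons (f := (· * c)) (a := a2) (l := l2), ← h2, ← h1]
    exact hL
  have hpow : ((y : P) ^ max b 0) ^ d * c ^ (-b) = (y ^ max (-b) 0) ^ d := by
    rw [hc, ← zpow_natCast (y ^ max b 0) d, ← zpow_natCast (y ^ max (-b) 0) d,
      ← zpow_mul, ← zpow_mul, ← zpow_mul, ← zpow_add]
    congr 1
    have hmax : max b 0 - b = max (-b) 0 := by omega
    rw [show max b 0 * (d : ℤ) + (d : ℤ) * (-b) = (max b 0 - b) * d by ring, hmax]
  rw [key, mul_zpow, mul_comm ((S.oFinSum d fun s => ztilde s * y ^ (-(s : ℤ))) ^ (-b)),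
    ← mul_assoc, hpow]
end

section
/- Involutivity of the generalized y-mutation at direction k: for y_k in a semifield ℙ, the mutation y_k ↦ y_k^{-1} is an involution, and for i ≠ k, applying the mutation formula y'_i = y_i (y_k^{[ε b_{ki}]_+})^{d_k} (⊕_{s=0}^{d_k} z̃_{k,s} y_k^{εs})^{-b_{ki}} twice (with the matrix mutation b'_{ki} = −b_{ki}, coefficient reversal z̃'_{k,s} = z̃_{k,d_k−s}, and the same sign ε for the second mutation applied to the mutated seed) returns y_i, provided z̃_{k,0} = z̃_{k,d_k} = 1. -/
namespace SemifieldStr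

variable {P : Type*} [CommGroup P]

/-! ### Auxiliary lemmas -/

variable (S : SemifieldStr P)

/-- `⊕` extended to `Option P` with `none` as a (formal) identity. -/
def oopt : Option P → Option P → Option P
  | none, b => b
  | some a, none => some a
  | some a, some b => some (S.o a b)

lemma oopt_comm : ∀ a b, S.oopt a b = S.oopt b a
  | none, none => rfl
  | none, some _ => rfl
  | some _, none => rfl
  | some a, some b => by simp [oopt, S.o_comm a b]

lemma oopt_assoc : ∀ a b c, S.oopt (S.oopt a b) c = S.oopt a (S.oopt b c)
  | none, _, _ => rfl
  | some _, none, _ => rfl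
  | some _, some _, none => rfl
  | some a, some b, some c => by simp [oopt, S.o_assoc a b c]

lemma osum_eq_foldr : ∀ (a : P) (l : List P),
    some (S.osum a l) = (((a :: l).map some).foldr S.oopt none)
  | a, [] => rfl
  | a, b :: l => by
    have ih := osum_eq_foldr b l
    simp only [List.map_cons, List.foldr_cons] at ih ⊢
    rw [← ih]
    rfl

lemma oFinSum_eq_foldr (d : ℕ) (f : ℕ → P) :
    some (S.oFinSum d f) = (((List.range (d + 1)).map (fun s => some (f s))).foldr S.oopt none) := by
  rw [List.range_succ_eq_map, oFinSum, osum_eq_foldr]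
  simp [List.map_map, Function.comp_def, Nat.succ_eq_add_one]

lemma oFinSum_congr (d : ℕ) (f g : ℕ → P) (h : ∀ s ≤ d, f s = g s) :
    S.oFinSum d f = S.oFinSum d g := by
  have : some (S.oFinSum d f) = some (S.oFinSum d g) := by
    rw [oFinSum_eq_foldr, oFinSum_eq_foldr]
    congr 1
    apply List.map_congr_left
    intro s hs
    rw [h s (by simpa using Nat.lt_succ_iff.mp (List.mem_range.mp hs))]
  exact Option.some.injEq _ _ ▸ (by simpa using this)

/-- `oFinSum` is invariant under reversal of the index. -/
lemma oFinSum_reverse (d : ℕ) (f : ℕ → P) :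
    S.oFinSum d (fun s => f (d - s)) = S.oFinSum d f := by
  have hcomm : Std.Commutative S.oopt := ⟨S.oopt_comm⟩
  have hassoc : Std.Associative S.oopt := ⟨S.oopt_assoc⟩
  have : some (S.oFinSum d (fun s => f (d - s))) = some (S.oFinSum d f) := by
    rw [oFinSum_eq_foldr, oFinSum_eq_foldr]
    have hrev : (List.range (d + 1)).map (fun s => d - s) = (List.range (d + 1)).reverse := by
      rw [List.range_eq_range' (n := d + 1), List.reverse_range', ← List.range_eq_range']
      congr 1
      funext x
      omega
    calc ((List.range (d + 1)).map (fun s => some (f (d - s)))).foldr S.oopt none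
        = (((List.range (d + 1)).map (fun s => d - s)).map (fun s => some (f s))).foldr
            S.oopt none := by rw [List.map_map]; rfl
      _ = (((List.range (d + 1)).map (fun s => some (f s))).reverse).foldr S.oopt none := by
            rw [hrev, ← List.map_reverse]
      _ = ((List.range (d + 1)).map (fun s => some (f s))).foldl (fun x y => S.oopt y x) none := by
            rw [List.foldr_reverse]
      _ = ((List.range (d + 1)).map (fun s => some (f s))).foldl S.oopt none := by
            congr 1; funext x y; exact S.oopt_comm y x
      _ = ((List.range (d + 1)).map (fun s => some (f s))).foldr S.oopt none :=
            List.foldl_eq_foldr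
  simpa using this

lemma mul_osum : ∀ (c a : P) (l : List P),
    c * S.osum a l = S.osum (c * a) (l.map (fun x => c * x))
  | c, a, [] => rfl
  | c, a, b :: l => by
    simp only [List.map_cons, osum]
    rw [mul_comm c (S.o a (S.osum b l)), S.o_distrib, mul_comm a c,
      mul_comm (S.osum b l) c, mul_osum c b l]

lemma mul_oFinSum (c : P) (d : ℕ) (f : ℕ → P) :
    c * S.oFinSum d f = S.oFinSum d (fun s => c * f s) := by
  rw [oFinSum, oFinSum, mul_osum, List.map_map]
  rfl

end SemifieldStr

/-- involutivity of the generalized `y`-mutation at direction `k`.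
The mutation `y_k ↦ y_k⁻¹` is an involution, and for `i ≠ k`, applying the
mutation formula
`y'_i = y_i (y_k^{[ε b_{ki}]_+})^{d_k} (⊕_{s=0}^{d_k} z̃_{k,s} y_k^{εs})^{-b_{ki}}`
twice — with the matrix mutation `b'_{ki} = −b_{ki}`, the coefficient reversal
`z̃'_{k,s} = z̃_{k,d_k−s}`, the mutated coefficient `y'_k = y_k⁻¹`, and the same
sign `ε` — returns `y_i`, provided `z̃_{k,0} = z̃_{k,d_k} = 1`. -/
theorem y_mutation_involutive {P : Type*} [CommGroup P] (S : SemifieldStr P)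
    (y_i y_k : P) (d : ℕ) (hd : 1 ≤ d) (b ε : ℤ) (hε : ε = 1 ∨ ε = -1)
    (ztilde : ℕ → P) (h0 : ztilde 0 = 1) (hdd : ztilde d = 1) :
    (y_k⁻¹)⁻¹ = y_k ∧
    (y_i * (y_k ^ max (ε * b) 0) ^ d *
          (S.oFinSum d fun s => ztilde s * y_k ^ (ε * (s : ℤ))) ^ (-b)) *
        ((y_k⁻¹) ^ max (ε * (-b)) 0) ^ d *
        (S.oFinSum d fun s => ztilde (d - s) * (y_k⁻¹) ^ (ε * (s : ℤ))) ^ (-(-b)) = y_i := by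
  refine ⟨inv_inv y_k, ?_⟩
  set F : P := S.oFinSum d fun s => ztilde s * y_k ^ (ε * (s : ℤ)) with hF
  clear_value F
  have hG : (S.oFinSum d fun s => ztilde (d - s) * (y_k⁻¹) ^ (ε * (s : ℤ)))
      = y_k ^ (-(ε * (d : ℤ))) * F := by
    rw [hF, S.mul_oFinSum]
    rw [← S.oFinSum_reverse d (fun s => y_k ^ (-(ε * (d : ℤ))) * (ztilde s * y_k ^ (ε * (s : ℤ))))]
    apply S.oFinSum_congr
    intro s hs
    have hc : ((d - s : ℕ) : ℤ) = (d : ℤ) - (s : ℤ) := by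
      push_cast [Nat.sub_add_cancel]; omega
    rw [hc]
    rw [inv_zpow, ← zpow_neg]
    rw [mul_comm (y_k ^ (-(ε * (d:ℤ)))) _, mul_assoc, ← zpow_add]
    ring_nf
  rw [hG]
  have hmax : max (ε * b) 0 = ε * b + max (ε * (-b)) 0 := by
    rcases le_total (ε * b) 0 with h | h <;> simp [max_eq_left, max_eq_right, *] <;> omega
  rw [hmax]
  group
  rw [mul_zpow, ← zpow_mul]
  group
  have key : ∀ (u v w : P) (e1 e2 c : ℤ), e1 + e2 = 0 →
      u * v ^ e1 * w ^ (-c) * v ^ e2 * w ^ c = u := by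
    intro u v w e1 e2 c h
    have h2 : e2 = -e1 := by omega
    subst h2
    rw [zpow_neg, zpow_neg]
    simp only [mul_assoc]
    rw [mul_left_comm ((w ^ c)⁻¹) ((v ^ e1)⁻¹) (w ^ c), inv_mul_cancel, mul_one,
      mul_inv_cancel, mul_one]
  exact key y_i y_k F _ _ b (by ring)
end
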